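/- arXiv:1705.05346 — 3 statements merged into one kernel-verified Lean document; each statement's English description precedes it below -/
import Mathlib

section
/- Let N and k be positive integers with 2 < k < N. Then there exists a C² function u : ℝ^N → ℝ such that u(x) ≥ 0 for every x, u is not constant, and P⁺_k(D²u(x)) ≤ 0 for every x ∈ ℝ^N. Explicitly, one may take u(x) = (1/8)(k(k−2)|x|⁴ − 2(k²−4)|x|² + k(k+2)) for |x| ≤ 1 and u(x) = |x|^{2−k} for |x| > 1. -/
open scoped BigOperators

/-- The eigenvalues of a symmetric real matrix, listed in nondecreasing order with
multiplicity (junk value `0` if the matrix is not Hermitian). -/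
noncomputable def sortedEig {n : ℕ} (A : Matrix (Fin n) (Fin n) ℝ) : Fin n → ℝ :=
  if h : A.IsHermitian then h.eigenvalues ∘ Tuple.sort h.eigenvalues else 0

/-- `P⁻_k(A)`: the sum of the `k` smallest eigenvalues of `A`. -/
noncomputable def Pminus {n : ℕ} (k : ℕ) (A : Matrix (Fin n) (Fin n) ℝ) : ℝ :=
  ∑ i : Fin n, if (i : ℕ) < k then sortedEig A i else 0

/-- `P⁺_k(A)`: the sum of the `k` largest eigenvalues of `A`. -/
noncomputable def Pplus {n : ℕ} (k : ℕ) (A : Matrix (Fin n) (Fin n) ℝ) : ℝ :=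
  ∑ i : Fin n, if n - k ≤ (i : ℕ) then sortedEig A i else 0

/-- The Hessian matrix `D²u(x)` of `u : ℝ^N → ℝ` at `x`. -/
noncomputable def hessianMatrix {N : ℕ} (u : EuclideanSpace ℝ (Fin N) → ℝ)
    (x : EuclideanSpace ℝ (Fin N)) : Matrix (Fin N) (Fin N) ℝ :=
  fun i j => iteratedFDeriv ℝ 2 u x ![EuclideanSpace.single i 1, EuclideanSpace.single j 1]

/-- `u` is a viscosity supersolution of `F(D²u) + g(u) = 0` in `Ω`. -/
def IsViscositySupersolution {N : ℕ} (F : Matrix (Fin N) (Fin N) ℝ → ℝ) (g : ℝ → ℝ)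
    (Ω : Set (EuclideanSpace ℝ (Fin N))) (u : EuclideanSpace ℝ (Fin N) → ℝ) : Prop :=
  ∀ x₀ ∈ Ω, ∀ φ : EuclideanSpace ℝ (Fin N) → ℝ, ContDiff ℝ 2 φ →
    IsLocalMinOn (fun x => u x - φ x) Ω x₀ →
      F (hessianMatrix φ x₀) + g (u x₀) ≤ 0

/-- `u` is a viscosity subsolution of `F(D²u) + g(u) = 0` in `Ω`. -/
def IsViscositySubsolution {N : ℕ} (F : Matrix (Fin N) (Fin N) ℝ → ℝ) (g : ℝ → ℝ)
    (Ω : Set (EuclideanSpace ℝ (Fin N))) (u : EuclideanSpace ℝ (Fin N) → ℝ) : Prop :=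
  ∀ x₀ ∈ Ω, ∀ φ : EuclideanSpace ℝ (Fin N) → ℝ, ContDiff ℝ 2 φ →
    IsLocalMaxOn (fun x => u x - φ x) Ω x₀ →
      0 ≤ F (hessianMatrix φ x₀) + g (u x₀)

/-- `u` is a viscosity solution of `F(D²u) + g(u) = 0` in `Ω`. -/
def IsViscositySolution {N : ℕ} (F : Matrix (Fin N) (Fin N) ℝ → ℝ) (g : ℝ → ℝ)
    (Ω : Set (EuclideanSpace ℝ (Fin N))) (u : EuclideanSpace ℝ (Fin N) → ℝ) : Prop :=
  IsViscositySubsolution F g Ω u ∧ IsViscositySupersolution F g Ω u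

/-!
Write `u x = g (‖x‖ ^ 2)`. The Hessian of such a radial function is
`2 g'(s) I + 4 g''(s) x xᵀ` with `s = ‖x‖ ^ 2`, and `g'' ≥ 0`, so every eigenvalue is at least
`2 g'(s)`. Hence the `k` largest eigenvalues sum to at most the trace minus `N - k` copies of
`2 g'(s)`, that is to `2 k g'(s) + 4 s g''(s)`. For `s > 1` this vanishes, `|x| ^ (2 - k)` being
the radial fundamental solution in dimension `k`; for `s ≤ 1` it equals
`k (k - 2) (k + 2) (s - 1) / 2 ≤ 0`. The polynomial piece is the quadratic in `s` that matches
`s ^ ((2 - k) / 2)` to second order at `s = 1`, which makes `u` a `C²` function.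
-/

open Matrix
open scoped ComplexOrder

namespace Matrix.IsHermitian

variable {𝕜 n : Type*} [RCLike 𝕜] [Fintype n] [DecidableEq n] {A : Matrix n n 𝕜}

lemma le_eigenvalues_of_posSemidef_sub (hA : A.IsHermitian) {a : ℝ}
    (h : (A - a • (1 : Matrix n n 𝕜)).PosSemidef) (i : n) : a ≤ hA.eigenvalues i := by
  set e := ⇑(hA.eigenvectorBasis i)
  have he : star e ⬝ᵥ e = 1 := by
    rw [dotProduct_comm, ← EuclideanSpace.inner_eq_star_dotProduct]
    simp
  have hnonneg := h.dotProduct_mulVec_nonneg e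
  rw [sub_mulVec, hA.mulVec_eigenvectorBasis, smul_mulVec, one_mulVec, ← sub_smul,
    dotProduct_smul, he, RCLike.real_smul_eq_coe_smul (K := 𝕜), smul_eq_mul, mul_one,
    RCLike.ofReal_nonneg] at hnonneg
  linarith

end Matrix.IsHermitian

lemma Pplus_le_trace_sub {n k : ℕ} {A : Matrix (Fin n) (Fin n) ℝ} (hA : A.IsHermitian) {a : ℝ}
    (ha : ∀ i, a ≤ hA.eigenvalues i) : Pplus k A ≤ A.trace - (n - k : ℕ) * a := by
  have hsort : sortedEig A = hA.eigenvalues ∘ Tuple.sort hA.eigenvalues := dif_pos hA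
  set L := ∑ i : Fin n, if (i : ℕ) < n - k then sortedEig A i else 0
  have htrace : A.trace = Pplus k A + L := by
    rw [Pplus, ← Finset.sum_add_distrib, hA.trace_eq_sum_eigenvalues, hsort,
      ← Equiv.sum_comp (Tuple.sort hA.eigenvalues)]
    refine Finset.sum_congr rfl fun i _ => ?_
    split_ifs <;> first | omega | simp
  have hL : (n - k : ℕ) * a ≤ L := by
    calc (n - k : ℕ) * a = ∑ i : Fin n, if (i : ℕ) < n - k then a else 0 := by
          rw [Finset.sum_ite, Finset.sum_const_zero, add_zero, Finset.sum_const,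
            Fin.card_filter_val_lt, min_eq_right (Nat.sub_le n k), nsmul_eq_mul]
      _ ≤ L := Finset.sum_le_sum fun i _ => by
          split_ifs
          · rw [hsort]; exact ha _
          · rfl
  linarith

lemma Pplus_smul_one_add_smul_vecMulVec_le {n k : ℕ} (hk : k ≤ n) (a : ℝ) {b : ℝ}
    (hb : 0 ≤ b) (v : Fin n → ℝ) :
    Pplus k (a • 1 + b • vecMulVec v v) ≤ k * a + b * (v ⬝ᵥ v) := by
  have hpsd : (b • vecMulVec v v).PosSemidef := by
    simpa using (posSemidef_vecMulVec_self_star v).smul hb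
  have hA : (a • 1 + b • vecMulVec v v).IsHermitian :=
    (isHermitian_one.smul (IsSelfAdjoint.all a)).add hpsd.isHermitian
  have ha := hA.le_eigenvalues_of_posSemidef_sub (a := a) (by simpa using hpsd)
  calc Pplus k (a • 1 + b • vecMulVec v v) ≤ _ := Pplus_le_trace_sub hA ha
    _ = k * a + b * (v ⬝ᵥ v) := by
      simp only [trace_add, trace_smul, trace_one, Fintype.card_fin, smul_eq_mul, trace_vecMulVec,
        Nat.cast_sub hk]
      ring


lemma hessianMatrix_comp_norm_sq {N : ℕ} {f f' : ℝ → ℝ} {c : ℝ}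
    (hf : ∀ s, HasDerivAt f (f' s) s) (x : EuclideanSpace ℝ (Fin N))
    (hf' : HasDerivAt f' c (‖x‖ ^ 2)) :
    hessianMatrix (fun y => f (‖y‖ ^ 2)) x
      = (2 * f' (‖x‖ ^ 2)) • 1 + (4 * c) • vecMulVec ⇑x ⇑x := by
  set L : EuclideanSpace ℝ (Fin N) →L[ℝ] EuclideanSpace ℝ (Fin N) →L[ℝ] ℝ :=
    2 • innerSL ℝ
  have hL (y) : HasFDerivAt (fun y : EuclideanSpace ℝ (Fin N) => ‖y‖ ^ 2) (L y) y :=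
    (hasStrictFDerivAt_norm_sq y).hasFDerivAt
  have hD (y) : HasFDerivAt (fun y => f (‖y‖ ^ 2)) (f' (‖y‖ ^ 2) • L y) y :=
    (hf _).comp_hasFDerivAt y (hL y)
  have hD2 : HasFDerivAt (fun y => f' (‖y‖ ^ 2) • L y)
      (f' (‖x‖ ^ 2) • L + (c • L x).smulRight (L x)) x :=
    (hf'.comp_hasFDerivAt x (hL x)).smul L.hasFDerivAt
  ext i j
  rw [hessianMatrix, iteratedFDeriv_two_apply, funext fun y => (hD y).fderiv, hD2.fderiv]
  simp only [L, _root_.add_apply, _root_.smul_apply, Matrix.add_apply, Matrix.smul_apply,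
    cons_val_zero, cons_val_one, ContinuousLinearMap.smulRight_apply, nsmul_eq_mul, smul_eq_mul,
    vecMulVec_apply, one_apply]
  rw [innerSL_apply_apply, innerSL_apply_apply, innerSL_apply_apply,
    EuclideanSpace.inner_single_right, EuclideanSpace.inner_single_right,
    EuclideanSpace.inner_single_right]
  simp only [one_mul, starRingEnd_apply, star_trivial, PiLp.single_apply, @eq_comm _ j i]
  split_ifs <;> ring

lemma hasDerivAt_ite_le {f g f' g' : ℝ → ℝ} {a : ℝ}
    (hf : ∀ s ≤ a, HasDerivAt f (f' s) s) (hg : ∀ s, a ≤ s → HasDerivAt g (g' s) s)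
    (hfg : f a = g a) (hfg' : f' a = g' a) (s : ℝ) :
    HasDerivAt (fun t => if t ≤ a then f t else g t) (if s ≤ a then f' s else g' s) s := by
  rcases lt_trichotomy s a with h | rfl | h
  · rw [if_pos h.le]
    refine (hf s h.le).congr_of_eventuallyEq ?_
    filter_upwards [Iio_mem_nhds h] with t ht using if_pos (le_of_lt ht)
  · rw [if_pos le_rfl]
    have hleft : HasDerivWithinAt (fun t => if t ≤ s then f t else g t) (f' s) (Set.Iic s) s :=
      (hf s le_rfl).hasDerivWithinAt.congr (fun t ht => if_pos ht) (if_pos le_rfl)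
    have hright :
        HasDerivWithinAt (fun t => if t ≤ s then f t else g t) (f' s) (Set.Ici s) s := by
      rw [hfg']
      refine (hg s le_rfl).hasDerivWithinAt.congr (fun t ht => ?_) (by rw [if_pos le_rfl, hfg])
      rcases (Set.mem_Ici.1 ht).eq_or_lt with rfl | hlt
      · rw [if_pos le_rfl, hfg]
      · rw [if_neg (not_le.2 hlt)]
    simpa [Set.Iic_union_Ici] using hleft.union hright
  · rw [if_neg (not_le.2 h)]
    refine (hg s h.le).congr_of_eventuallyEq ?_
    filter_upwards [Ioi_mem_nhds h] with t ht using if_neg (not_le.2 ht)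

lemma contDiff_two_of_hasDerivAt {f f' f'' : ℝ → ℝ} (hf : ∀ s, HasDerivAt f (f' s) s)
    (hf' : ∀ s, HasDerivAt f' (f'' s) s) (hf'' : Continuous f'') : ContDiff ℝ 2 f := by
  have hderiv : deriv f = f' := funext fun s => (hf s).deriv
  have hderiv' : deriv f' = f'' := funext fun s => (hf' s).deriv
  rw [show (2 : WithTop ℕ∞) = 1 + 1 from rfl, contDiff_succ_iff_deriv, hderiv,
    contDiff_one_iff_deriv, hderiv']
  exact ⟨fun s => (hf s).differentiableAt, by simp, fun s => (hf' s).differentiableAt, hf''⟩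

namespace PucciBarrier

noncomputable def profile (k s : ℝ) : ℝ :=
  if s ≤ 1 then (k * (k - 2) * s ^ 2 - 2 * (k ^ 2 - 4) * s + k * (k + 2)) / 8
  else s ^ ((2 - k) / 2)

noncomputable def profileDeriv (k s : ℝ) : ℝ :=
  if s ≤ 1 then (k * (k - 2) * s - (k ^ 2 - 4)) / 4 else (2 - k) / 2 * s ^ ((2 - k) / 2 - 1)

noncomputable def profileDeriv2 (k s : ℝ) : ℝ :=
  if s ≤ 1 then k * (k - 2) / 4 else k * (k - 2) / 4 * s ^ ((2 - k) / 2 - 2)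

lemma hasDerivAt_profile (k s : ℝ) : HasDerivAt (profile k) (profileDeriv k s) s := by
  unfold profile profileDeriv
  apply hasDerivAt_ite_le
  · intro s _
    exact (((hasDerivAt_pow 2 s).const_mul _).sub ((hasDerivAt_id s).const_mul _)).add_const _
      |>.div_const 8 |>.congr_deriv (by push_cast; ring)
  · intro s hs
    exact Real.hasDerivAt_rpow_const (Or.inl (zero_lt_one.trans_le hs).ne')
  · norm_num; ring
  · norm_num; ring

lemma hasDerivAt_profileDeriv (k s : ℝ) : HasDerivAt (profileDeriv k) (profileDeriv2 k s) s := by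
  unfold profileDeriv profileDeriv2
  apply hasDerivAt_ite_le
  · intro s _
    exact ((hasDerivAt_id s).const_mul _).sub_const _ |>.div_const 4 |>.congr_deriv (by simp)
  · intro s hs
    exact (Real.hasDerivAt_rpow_const (Or.inl (zero_lt_one.trans_le hs).ne')).const_mul _
      |>.congr_deriv (by ring_nf)
  · rw [Real.one_rpow]; ring
  · norm_num

lemma continuous_profileDeriv2 (k : ℝ) : Continuous (profileDeriv2 k) := by
  refine continuous_if_le continuous_id continuous_const continuousOn_const
    (continuousOn_const.mul (continuousOn_id.rpow_const fun s hs => Or.inl ?_)) fun s hs => ?_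
  · exact (zero_lt_one.trans_le hs).ne'
  · simp [hs]

lemma contDiff_profile (k : ℝ) : ContDiff ℝ 2 (profile k) :=
  contDiff_two_of_hasDerivAt (hasDerivAt_profile k) (hasDerivAt_profileDeriv k)
    (continuous_profileDeriv2 k)

lemma profile_sq (k : ℝ) {r : ℝ} (hr : 0 ≤ r) :
    profile k (r ^ 2) = if r ≤ 1 then
      (1 / 8) * (k * (k - 2) * r ^ 4 - 2 * (k ^ 2 - 4) * r ^ 2 + k * (k + 2))
    else r ^ (2 - k) := by
  simp only [profile, pow_le_one_iff_of_nonneg hr two_ne_zero]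
  split_ifs
  · ring
  · rw [← Real.rpow_natCast, ← Real.rpow_mul hr]
    ring_nf

lemma profile_nonneg {k s : ℝ} (hk : 2 ≤ k) (hs : 0 ≤ s) : 0 ≤ profile k s := by
  rw [profile]
  split_ifs with h
  · -- 8 * profile k s = 8 + (k - 2) * (1 - s) * (k + 4 - k * s)
    nlinarith [mul_nonneg (mul_nonneg (sub_nonneg.2 hk) (sub_nonneg.2 h))
      (by nlinarith : 0 ≤ k + 4 - k * s)]
  · positivity

lemma profileDeriv2_nonneg {k : ℝ} (hk : 2 ≤ k) (s : ℝ) : 0 ≤ profileDeriv2 k s := by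
  have : 0 ≤ k * (k - 2) / 4 := by nlinarith
  rw [profileDeriv2]
  split_ifs with h
  · exact this
  · exact mul_nonneg this (Real.rpow_nonneg (by linarith) _)

lemma profileDeriv_pucci_le_zero {k s : ℝ} (hk : 2 ≤ k) :
    k * (2 * profileDeriv k s) + 4 * profileDeriv2 k s * s ≤ 0 := by
  rw [profileDeriv, profileDeriv2]
  split_ifs with h
  · nlinarith [mul_nonneg (mul_nonneg (by linarith : 0 ≤ k) (by nlinarith : 0 ≤ k ^ 2 - 4))
      (sub_nonneg.2 h)]
  · have hs : s ≠ 0 := by linarith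
    have hpow : s ^ ((2 - k) / 2 - 2) * s = s ^ ((2 - k) / 2 - 1) := by
      rw [← Real.rpow_add_one hs]
      ring_nf
    apply le_of_eq
    calc _ = k * (2 - k) * (s ^ ((2 - k) / 2 - 1) - s ^ ((2 - k) / 2 - 2) * s) := by ring
      _ = 0 := by rw [hpow, sub_self, mul_zero]

end PucciBarrier

open PucciBarrier

theorem statement2 (N k : ℕ) (hk2 : 2 < k) (hkN : k < N) :
    let u : EuclideanSpace ℝ (Fin N) → ℝ := fun x =>
      if ‖x‖ ≤ 1 then
        (1 / 8) * ((k : ℝ) * ((k : ℝ) - 2) * ‖x‖ ^ 4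
          - 2 * ((k : ℝ) ^ 2 - 4) * ‖x‖ ^ 2 + (k : ℝ) * ((k : ℝ) + 2))
      else ‖x‖ ^ ((2 : ℝ) - (k : ℝ))
    ContDiff ℝ 2 u ∧ (∀ x, 0 ≤ u x) ∧ ¬ (∃ c : ℝ, ∀ x, u x = c) ∧
      ∀ x, Pplus k (hessianMatrix u x) ≤ 0 := by
  intro u
  have hk : (2 : ℝ) < k := by exact_mod_cast hk2
  have hu : u = fun x => profile k (‖x‖ ^ 2) :=
    funext fun x => (profile_sq k (norm_nonneg x)).symm
  rw [hu]
  refine ⟨(contDiff_profile k).comp (contDiff_norm_sq ℝ),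
    fun x => profile_nonneg hk.le (sq_nonneg _), ?_, fun x => ?_⟩
  · rintro ⟨c, hc⟩
    have h0 := hc 0
    have h1 := hc (EuclideanSpace.single (⟨0, by omega⟩ : Fin N) 1)
    norm_num [profile] at h0 h1
    nlinarith
  · have hxx : ⇑x ⬝ᵥ ⇑x = ‖x‖ ^ 2 := by
      rw [EuclideanSpace.real_norm_sq_eq]
      simp only [dotProduct, sq]
    rw [hessianMatrix_comp_norm_sq (hasDerivAt_profile k) x (hasDerivAt_profileDeriv k _)]
    calc _ ≤ k * (2 * profileDeriv k (‖x‖ ^ 2))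
          + 4 * profileDeriv2 k (‖x‖ ^ 2) * (⇑x ⬝ᵥ ⇑x) :=
          Pplus_smul_one_add_smul_vecMulVec_le hkN.le _
            (mul_nonneg zero_le_four (profileDeriv2_nonneg hk.le _)) _
      _ ≤ 0 := hxx ▸ profileDeriv_pucci_le_zero hk.le
end

section
/- Let N and k be positive integers with k < N, and let p > 0. Then there exists a continuous nonnegative function u : ℝ^N → ℝ with u not identically 0 which is a viscosity solution of P⁻_k(D²u) + u^p = 0 in ℝ^N. In particular, for 0 < p < 1 and any R > 0, the function u(x) = [ (1−p)/(2k) · (R² − |x|²) ]^{1/(1−p)} for |x| ≤ R and u(x) = 0 for |x| > R is such a viscosity solution. -/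
open scoped BigOperators

/-!
A radial function `u(x) = ψ(‖x‖²)` has Hessian `2ψ' I + 4ψ'' x xᵀ`; when `ψ'' ≥ 0` its `N - 1`
smallest eigenvalues equal `2ψ'`, so for `k < N` the equation reduces to the ODE
`2k ψ' + ψ^p = 0`. It is solved by `ψ(s) = ((1-p)/(2k) (d - s))^{1/(1-p)}` for `p ≠ 1` and by
`e^{-s/(2k)}` for `p = 1`; for `p < 1`, `d = R²` gives a profile vanishing at `‖x‖ = R`, which is
continued by `0`.

Instead of computing Hessians, the viscosity inequalities are checked along lines: where `u - φ`
has a local extremum at `x₀`, comparing second derivatives along `t ↦ x₀ + t v` gives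
`D²φ(x₀) ≥ 2ψ'` in every direction (subsolution) and `D²φ(x₀) ≤ 2ψ'` on `x₀ᗮ`
(supersolution), which bounds `P⁻_k(D²φ(x₀))` by `2kψ'` from either side. On and outside the
sphere `‖x‖ = R` the comparison profile is `0`: `u ≥ 0`, and `u` vanishes on the hyperplane
tangent at `x₀` to the sphere through `x₀`.
-/

open Filter Set Topology Matrix

def HasSecondDerivAt (f f' : ℝ → ℝ) (f'' x : ℝ) : Prop :=
  (∀ᶠ t in 𝓝 x, HasDerivAt f (f' t) t) ∧ HasDerivAt f' f'' x

namespace HasSecondDerivAt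

variable {f f' g g' : ℝ → ℝ} {a b x : ℝ}

theorem sub (hf : HasSecondDerivAt f f' a x) (hg : HasSecondDerivAt g g' b x) :
    HasSecondDerivAt (fun t => f t - g t) (fun t => f' t - g' t) (a - b) x :=
  ⟨by filter_upwards [hf.1, hg.1] with t hft hgt using hft.sub hgt, hf.2.sub hg.2⟩

theorem comp {y : ℝ} (hg : HasSecondDerivAt g g' b y) (hf : HasSecondDerivAt f f' a x)
    (hy : f x = y) :
    HasSecondDerivAt (fun t => g (f t)) (fun t => g' (f t) * f' t) (b * f' x ^ 2 + g' y * a) x := by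
  have hfx : HasDerivAt f (f' x) x := hf.1.self_of_nhds
  have hlim : Tendsto f (𝓝 x) (𝓝 y) := hy ▸ hfx.continuousAt.tendsto
  refine ⟨?_, ?_⟩
  · filter_upwards [hf.1, hlim.eventually hg.1] with t hft hgt using hgt.comp t hft
  · have := (hy ▸ hg.2 : HasDerivAt g' b (f x)).comp x hfx |>.mul hf.2
    rw [show b * f' x ^ 2 + g' y * a = b * f' x * f' x + g' (f x) * a by rw [hy]; ring]
    exact this

theorem nonneg_of_isLocalMin (hf : HasSecondDerivAt f f' a x) (hmin : IsLocalMin f x) :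
    0 ≤ a := by
  -- If `a < 0`, the sufficient second derivative test makes `x` a local maximum as well, so `f`
  -- is locally constant and `a = 0`.
  by_contra! ha
  have hderiv : deriv f =ᶠ[𝓝 x] f' := hf.1.mono fun t ht => ht.deriv
  have h2 : deriv (deriv f) x = a := hderiv.deriv_eq.trans hf.2.deriv
  have h1 : deriv f x = 0 := hf.1.self_of_nhds.deriv.trans
    (hmin.hasDerivAt_eq_zero hf.1.self_of_nhds)
  have hmax := isLocalMax_of_deriv_deriv_neg (h2 ▸ ha) h1 hf.1.self_of_nhds.continuousAt
  have hconst : f =ᶠ[𝓝 x] fun _ => f x :=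
    (hmin.and hmax).mono fun t ht => le_antisymm ht.2 ht.1
  have : deriv (deriv f) x = 0 := by
    rw [hconst.deriv.deriv_eq]; simp
  linarith

end HasSecondDerivAt

theorem hasSecondDerivAt_const (c x : ℝ) :
    HasSecondDerivAt (fun _ => c) (fun _ => 0) 0 x :=
  ⟨Eventually.of_forall fun t => hasDerivAt_const t c, hasDerivAt_const x 0⟩

section Line

variable {E : Type*} [NormedAddCommGroup E] [NormedSpace ℝ E]

theorem hasDerivAt_line (x₀ v : E) (t : ℝ) : HasDerivAt (fun s : ℝ => x₀ + s • v) v t := by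
  simpa using ((hasDerivAt_id t).smul_const v).const_add x₀

theorem tendsto_line (x₀ v : E) : Tendsto (fun s : ℝ => x₀ + s • v) (𝓝 0) (𝓝 x₀) := by
  simpa using (hasDerivAt_line x₀ v 0).continuousAt.tendsto

theorem ContDiff.hasSecondDerivAt_line {φ : E → ℝ} (hφ : ContDiff ℝ 2 φ) (x₀ v : E) :
    HasSecondDerivAt (fun t => φ (x₀ + t • v)) (fun t => fderiv ℝ φ (x₀ + t • v) v)
      (fderiv ℝ (fderiv ℝ φ) x₀ v v) 0 := by
  have hD : Differentiable ℝ (fderiv ℝ φ) :=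
    (hφ.fderiv_right (m := 1) le_rfl).differentiable one_ne_zero
  refine ⟨Eventually.of_forall fun t => ?_, ?_⟩
  · exact ((hφ.differentiable two_ne_zero) _).hasFDerivAt.comp_hasDerivAt t (hasDerivAt_line x₀ v t)
  · have h := (hD (x₀ + (0 : ℝ) • v)).hasFDerivAt.comp_hasDerivAt 0 (hasDerivAt_line x₀ v 0)
    simpa using h.clm_apply (hasDerivAt_const 0 v)

end Line

section InnerProduct

variable {E : Type*} [NormedAddCommGroup E] [InnerProductSpace ℝ E]

theorem hasSecondDerivAt_norm_sq_line (x₀ v : E) :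
    HasSecondDerivAt (fun t : ℝ => ‖x₀ + t • v‖ ^ 2)
      (fun t => 2 * inner ℝ (x₀ + t • v) v) (2 * ‖v‖ ^ 2) 0 := by
  refine ⟨Eventually.of_forall fun t => (hasDerivAt_line x₀ v t).norm_sq, ?_⟩
  have := ((hasDerivAt_line x₀ v 0).inner ℝ (hasDerivAt_const 0 v)).const_mul 2
  simpa [real_inner_self_eq_norm_sq] using this

theorem norm_le_norm_of_inner_sub_eq_zero {x x₀ : E} (h : inner ℝ (x - x₀) x₀ = 0) :
    ‖x₀‖ ≤ ‖x‖ := by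
  have := norm_add_sq_eq_norm_sq_add_norm_sq_real (x := x₀) (y := x - x₀)
    (by rw [real_inner_comm]; exact h)
  rw [add_sub_cancel] at this
  exact (mul_self_le_mul_self_iff (norm_nonneg _) (norm_nonneg _)).2 (by
    rw [this]; exact le_add_of_nonneg_right (mul_self_nonneg _))

end InnerProduct

section Spectral

variable {n : Type*} [Fintype n] [DecidableEq n] {A : Matrix n n ℝ} (hA : A.IsHermitian)
include hA

theorem Matrix.IsHermitian.dotProduct_mulVec_eigenvectorBasis (x : EuclideanSpace ℝ n) (j : n) :
    ⇑x ⬝ᵥ A *ᵥ ⇑(hA.eigenvectorBasis j) = hA.eigenvalues j * inner ℝ (hA.eigenvectorBasis j) x := by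
  rw [hA.mulVec_eigenvectorBasis, dotProduct_smul, smul_eq_mul,
    EuclideanSpace.inner_eq_star_dotProduct, star_trivial, dotProduct_comm]

theorem Matrix.IsHermitian.le_eigenvalues {c : ℝ}
    (h : ∀ v : EuclideanSpace ℝ n, c * ‖v‖ ^ 2 ≤ ⇑v ⬝ᵥ A *ᵥ ⇑v) (i : n) :
    c ≤ hA.eigenvalues i := by
  simpa [hA.dotProduct_mulVec_eigenvectorBasis, hA.eigenvectorBasis.inner_eq_one,
    hA.eigenvectorBasis.orthonormal.1 i] using h (hA.eigenvectorBasis i)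

theorem Matrix.IsHermitian.eigenvalues_le_or_eigenvalues_le {c : ℝ} {w : EuclideanSpace ℝ n}
    (h : ∀ v : EuclideanSpace ℝ n, inner ℝ v w = 0 → ⇑v ⬝ᵥ A *ᵥ ⇑v ≤ c * ‖v‖ ^ 2)
    {i j : n} (hij : i ≠ j) : hA.eigenvalues i ≤ c ∨ hA.eigenvalues j ≤ c := by
  set e := hA.eigenvectorBasis
  have hQ : ∀ (x : EuclideanSpace ℝ n) k, ⇑x ⬝ᵥ A *ᵥ ⇑(e k) = hA.eigenvalues k * inner ℝ (e k) x :=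
    hA.dotProduct_mulVec_eigenvectorBasis
  have hee : ∀ k, inner ℝ (e k) (e k) = 1 := e.inner_eq_one
  have hij' : inner ℝ (e i) (e j) = 0 := e.orthonormal.2 hij
  have hji' : inner ℝ (e j) (e i) = 0 := e.orthonormal.2 hij.symm
  set a := inner ℝ (e i) w
  set b := inner ℝ (e j) w
  by_cases ha : a = 0
  · left
    simpa [hQ, hee, e.orthonormal.1 i] using h (e i) ha
  -- `b • eᵢ - a • eⱼ` is orthogonal to `w`, and on it the form is `b² λᵢ + a² λⱼ`.
  set v := b • e i - a • e j
  have hv : inner ℝ v w = 0 := by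
    simp only [v, inner_sub_left, real_inner_smul_left, a, b]; ring
  have hvi : inner ℝ (e i) v = b := by
    simp [v, inner_sub_right, real_inner_smul_right, hij']
  have hvj : inner ℝ (e j) v = -a := by
    simp [v, inner_sub_right, real_inner_smul_right, hji']
  have hQv : ⇑v ⬝ᵥ A *ᵥ ⇑v = b ^ 2 * hA.eigenvalues i + a ^ 2 * hA.eigenvalues j := by
    simp only [v, WithLp.ofLp_sub, WithLp.ofLp_smul, mulVec_sub, mulVec_smul, dotProduct_sub,
      dotProduct_smul, smul_eq_mul]
    simp only [← WithLp.ofLp_smul, ← WithLp.ofLp_sub]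
    rw [hQ, hQ, hvi, hvj]
    ring
  have hnorm : ‖v‖ ^ 2 = b ^ 2 + a ^ 2 := by
    rw [← real_inner_self_eq_norm_sq]
    simp only [v, inner_sub_left, inner_sub_right, real_inner_smul_left, real_inner_smul_right,
      hij', hji', hee]
    ring
  have := h v hv
  rw [hQv, hnorm] at this
  by_contra! hlt
  nlinarith [mul_pos (pow_pos (abs_pos.2 ha) 2) (sub_pos.2 hlt.2), sq_nonneg b,
    mul_nonneg (sq_nonneg b) (sub_pos.2 hlt.1).le, sq_abs a]

end Spectral

section Pminus

variable {N k : ℕ} {A : Matrix (Fin N) (Fin N) ℝ} {c : ℝ}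

theorem sum_ite_val_lt_const (hk : k ≤ N) (c : ℝ) :
    ∑ i : Fin N, (if (i : ℕ) < k then c else 0) = k * c := by
  rw [Finset.sum_ite, Finset.sum_const_zero, add_zero, Finset.sum_const, nsmul_eq_mul,
    Fin.card_filter_val_lt, min_eq_right hk]

theorem sortedEig_eq (hA : A.IsHermitian) :
    sortedEig A = hA.eigenvalues ∘ Tuple.sort hA.eigenvalues := dif_pos hA

theorem Matrix.IsHermitian.mul_le_Pminus (hA : A.IsHermitian) (hk : k ≤ N)
    (h : ∀ v : EuclideanSpace ℝ (Fin N), c * ‖v‖ ^ 2 ≤ ⇑v ⬝ᵥ A *ᵥ ⇑v) :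
    k * c ≤ Pminus k A := by
  rw [← sum_ite_val_lt_const hk, Pminus]
  gcongr with i
  split_ifs
  · rw [sortedEig_eq hA]; exact hA.le_eigenvalues h _
  · rfl

/-- At most one eigenvalue exceeds `c`, so the `N - 1` smallest ones are at most `c`. -/
theorem Matrix.IsHermitian.Pminus_le_mul (hA : A.IsHermitian) (hk : k < N)
    {w : EuclideanSpace ℝ (Fin N)}
    (h : ∀ v : EuclideanSpace ℝ (Fin N), inner ℝ v w = 0 → ⇑v ⬝ᵥ A *ᵥ ⇑v ≤ c * ‖v‖ ^ 2) :
    Pminus k A ≤ k * c := by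
  rw [← sum_ite_val_lt_const hk.le, Pminus]
  gcongr with i
  split_ifs with hi
  · set σ := Tuple.sort hA.eigenvalues
    let last : Fin N := ⟨N - 1, by omega⟩
    have hil : i ≠ last := Fin.ne_of_val_ne (by simp [last]; omega)
    rw [sortedEig_eq hA, Function.comp_apply]
    by_contra! hlt
    have hlast : c < hA.eigenvalues (σ last) :=
      hlt.trans_le (Tuple.monotone_sort hA.eigenvalues (show (i : ℕ) ≤ N - 1 by omega))
    rcases hA.eigenvalues_le_or_eigenvalues_le h (σ.injective.ne hil) with h' | h' <;> linarith
  · rfl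

end Pminus

section Hessian

variable {N : ℕ} {φ : EuclideanSpace ℝ (Fin N) → ℝ} {x : EuclideanSpace ℝ (Fin N)}

theorem ContinuousLinearMap.apply_eq_sum_single {F : Type*} [NormedAddCommGroup F]
    [NormedSpace ℝ F] (L : EuclideanSpace ℝ (Fin N) →L[ℝ] F) (v : EuclideanSpace ℝ (Fin N)) :
    L v = ∑ i, v i • L (EuclideanSpace.single i 1) := by
  conv_lhs => rw [← (EuclideanSpace.basisFun (Fin N) ℝ).sum_repr v]
  simp [map_sum, map_smul]

theorem hessianMatrix_apply (i j : Fin N) : hessianMatrix φ x i j =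
    fderiv ℝ (fderiv ℝ φ) x (EuclideanSpace.single i 1) (EuclideanSpace.single j 1) := by
  simp [hessianMatrix, iteratedFDeriv_two_apply]

theorem hessianMatrix_isHermitian (hφ : ContDiff ℝ 2 φ) : (hessianMatrix φ x).IsHermitian := by
  ext i j
  simp only [Matrix.conjTranspose_apply, star_trivial, hessianMatrix_apply]
  exact second_derivative_symmetric (fun y => ((hφ.differentiable two_ne_zero) y).hasFDerivAt)
    (((hφ.fderiv_right (m := 1) le_rfl).differentiable one_ne_zero) x).hasFDerivAt _ _

theorem dotProduct_hessianMatrix_mulVec (v : EuclideanSpace ℝ (Fin N)) :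
    ⇑v ⬝ᵥ hessianMatrix φ x *ᵥ ⇑v = fderiv ℝ (fderiv ℝ φ) x v v := by
  rw [(fderiv ℝ (fderiv ℝ φ) x).apply_eq_sum_single v, _root_.sum_apply]
  refine Finset.sum_congr rfl fun i _ => ?_
  rw [_root_.smul_apply, (fderiv ℝ (fderiv ℝ φ) x _).apply_eq_sum_single v, smul_eq_mul,
    Matrix.mulVec, dotProduct]
  simp only [hessianMatrix_apply, smul_eq_mul, mul_comm]

end Hessian

section Touching

variable {E : Type*} [NormedAddCommGroup E] [NormedSpace ℝ E] {u φ : E → ℝ} {x₀ v : E}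
  {h h' : ℝ → ℝ} {b : ℝ}

theorem le_fderiv_fderiv_of_isLocalMax_sub (hφ : ContDiff ℝ 2 φ)
    (hmax : IsLocalMax (fun x => u x - φ x) x₀) (hh : HasSecondDerivAt h h' b 0)
    (h0 : h 0 = u x₀) (hle : ∀ᶠ t in 𝓝 0, h t ≤ u (x₀ + t • v)) :
    b ≤ fderiv ℝ (fderiv ℝ φ) x₀ v v := by
  have hmin : IsLocalMin (fun t => φ (x₀ + t • v) - h t) 0 := by
    filter_upwards [hle, (tendsto_line x₀ v).eventually hmax] with t hle hmax
    simp only [zero_smul, add_zero, h0]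
    linarith
  linarith [((hφ.hasSecondDerivAt_line x₀ v).sub hh).nonneg_of_isLocalMin hmin]

theorem fderiv_fderiv_le_of_isLocalMin_sub (hφ : ContDiff ℝ 2 φ)
    (hmin : IsLocalMin (fun x => u x - φ x) x₀) (hh : HasSecondDerivAt h h' b 0)
    (h0 : h 0 = u x₀) (hle : ∀ᶠ t in 𝓝 0, u (x₀ + t • v) ≤ h t) :
    fderiv ℝ (fderiv ℝ φ) x₀ v v ≤ b := by
  have hmin' : IsLocalMin (fun t => h t - φ (x₀ + t • v)) 0 := by
    filter_upwards [hle, (tendsto_line x₀ v).eventually hmin] with t hle hmin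
    simp only [zero_smul, add_zero, h0]
    linarith
  linarith [(hh.sub (hφ.hasSecondDerivAt_line x₀ v)).nonneg_of_isLocalMin hmin']

end Touching

section Radial

variable {E : Type*} [NormedAddCommGroup E] [InnerProductSpace ℝ E]

structure RadialContact (u : E → ℝ) (ψ : ℝ → ℝ) (x₀ : E) : Prop where
  eq : u x₀ = ψ (‖x₀‖ ^ 2)
  le : ∀ᶠ x in 𝓝 x₀, ψ (‖x‖ ^ 2) ≤ u x
  le_tangent : ∀ᶠ x in 𝓝 x₀, inner ℝ (x - x₀) x₀ = 0 → u x ≤ ψ (‖x‖ ^ 2)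

variable {u φ : E → ℝ} {ψ ψ' : ℝ → ℝ} {b : ℝ} {x₀ : E}

theorem RadialContact.of_eventuallyEq (h : ∀ᶠ x in 𝓝 x₀, u x = ψ (‖x‖ ^ 2)) :
    RadialContact u ψ x₀ :=
  ⟨h.self_of_nhds, h.mono fun _ hx => hx.ge, h.mono fun _ hx _ => hx.le⟩

namespace RadialContact

theorem le_fderiv_fderiv (hc : RadialContact u ψ x₀) (hφ : ContDiff ℝ 2 φ)
    (hmax : IsLocalMax (fun x => u x - φ x) x₀) (hψ : HasSecondDerivAt ψ ψ' b (‖x₀‖ ^ 2))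
    (hb : 0 ≤ b) (v : E) :
    2 * ψ' (‖x₀‖ ^ 2) * ‖v‖ ^ 2 ≤ fderiv ℝ (fderiv ℝ φ) x₀ v v := by
  have hline := hψ.comp (hasSecondDerivAt_norm_sq_line x₀ v) (by simp)
  have := le_fderiv_fderiv_of_isLocalMax_sub hφ hmax hline (by simp [hc.eq])
    ((tendsto_line x₀ v).eventually hc.le)
  nlinarith [mul_nonneg hb (sq_nonneg (2 * inner ℝ (x₀ + (0 : ℝ) • v) v))]

theorem fderiv_fderiv_le (hc : RadialContact u ψ x₀) (hφ : ContDiff ℝ 2 φ)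
    (hmin : IsLocalMin (fun x => u x - φ x) x₀) (hψ : HasSecondDerivAt ψ ψ' b (‖x₀‖ ^ 2))
    {v : E} (hv : inner ℝ v x₀ = 0) :
    fderiv ℝ (fderiv ℝ φ) x₀ v v ≤ 2 * ψ' (‖x₀‖ ^ 2) * ‖v‖ ^ 2 := by
  have hline := hψ.comp (hasSecondDerivAt_norm_sq_line x₀ v) (by simp)
  have hle : ∀ᶠ t : ℝ in 𝓝 0, u (x₀ + t • v) ≤ ψ (‖x₀ + t • v‖ ^ 2) :=
    ((tendsto_line x₀ v).eventually hc.le_tangent).mono fun t ht =>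
      ht (by simp [real_inner_smul_left, hv])
  have := fderiv_fderiv_le_of_isLocalMin_sub hφ hmin hline (by simp [hc.eq]) hle
  rw [zero_smul, add_zero, real_inner_comm, hv] at this
  linarith

end RadialContact

end Radial

section Viscosity

variable {N k : ℕ} {u φ : EuclideanSpace ℝ (Fin N) → ℝ} {ψ ψ' : ℝ → ℝ} {b : ℝ}
  {x₀ : EuclideanSpace ℝ (Fin N)}

theorem RadialContact.mul_le_Pminus (hc : RadialContact u ψ x₀) (hk : k ≤ N)
    (hφ : ContDiff ℝ 2 φ) (hmax : IsLocalMax (fun x => u x - φ x) x₀)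
    (hψ : HasSecondDerivAt ψ ψ' b (‖x₀‖ ^ 2)) (hb : 0 ≤ b) :
    k * (2 * ψ' (‖x₀‖ ^ 2)) ≤ Pminus k (hessianMatrix φ x₀) :=
  (hessianMatrix_isHermitian hφ).mul_le_Pminus hk fun v => by
    rw [dotProduct_hessianMatrix_mulVec]; exact hc.le_fderiv_fderiv hφ hmax hψ hb v

theorem RadialContact.Pminus_le_mul (hc : RadialContact u ψ x₀) (hk : k < N)
    (hφ : ContDiff ℝ 2 φ) (hmin : IsLocalMin (fun x => u x - φ x) x₀)
    (hψ : HasSecondDerivAt ψ ψ' b (‖x₀‖ ^ 2)) :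
    Pminus k (hessianMatrix φ x₀) ≤ k * (2 * ψ' (‖x₀‖ ^ 2)) :=
  (hessianMatrix_isHermitian hφ).Pminus_le_mul hk fun v hv => by
    rw [dotProduct_hessianMatrix_mulVec]; exact hc.fderiv_fderiv_le hφ hmin hψ hv

theorem isViscositySolution_Pminus_of_radialContact {g : ℝ → ℝ} (hk : k < N)
    (h : ∀ x₀, ∃ ψ ψ' : ℝ → ℝ, ∃ b, RadialContact u ψ x₀ ∧
      HasSecondDerivAt ψ ψ' b (‖x₀‖ ^ 2) ∧ 0 ≤ b ∧ k * (2 * ψ' (‖x₀‖ ^ 2)) + g (u x₀) = 0) :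
    IsViscositySolution (Pminus k) g univ u := by
  constructor
  · intro x₀ _ φ hφ hmax
    obtain ⟨ψ, ψ', b, hc, hψ, hb, heq⟩ := h x₀
    linarith [hc.mul_le_Pminus hk.le hφ (isLocalMaxOn_univ_iff.1 hmax) hψ hb]
  · intro x₀ _ φ hφ hmin
    obtain ⟨ψ, ψ', b, hc, hψ, -, heq⟩ := h x₀
    linarith [hc.Pminus_le_mul hk hφ (isLocalMinOn_univ_iff.1 hmin) hψ]

end Viscosity

section Profiles

variable {k : ℕ} {p : ℝ}

theorem hasSecondDerivAt_of_ode {ψ : ℝ → ℝ} {s : ℝ}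
    (hψ : ∀ᶠ t in 𝓝 s, HasDerivAt ψ (-ψ t ^ p / (2 * k)) t) (hpos : 0 < ψ s) :
    HasSecondDerivAt ψ (fun t => -ψ t ^ p / (2 * k))
      (p * ψ s ^ (p - 1) * ψ s ^ p / (2 * k) ^ 2) s := by
  refine ⟨hψ, ?_⟩
  have hF := ((Real.hasDerivAt_rpow_const (p := p) (Or.inl hpos.ne')).neg.div_const
    (2 * k : ℝ)).comp s hψ.self_of_nhds
  exact hF.congr_deriv (by ring)

theorem exists_radialContact_of_ode {N : ℕ} (hk : k ≠ 0) (hp : 0 < p)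
    {u : EuclideanSpace ℝ (Fin N) → ℝ} {x₀ : EuclideanSpace ℝ (Fin N)} {ψ : ℝ → ℝ}
    (hu : ∀ᶠ x in 𝓝 x₀, u x = ψ (‖x‖ ^ 2))
    (hψ : ∀ᶠ t in 𝓝 (‖x₀‖ ^ 2), HasDerivAt ψ (-ψ t ^ p / (2 * k)) t)
    (hpos : 0 < ψ (‖x₀‖ ^ 2)) :
    ∃ ψ ψ' : ℝ → ℝ, ∃ b, RadialContact u ψ x₀ ∧ HasSecondDerivAt ψ ψ' b (‖x₀‖ ^ 2) ∧ 0 ≤ b ∧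
      k * (2 * ψ' (‖x₀‖ ^ 2)) + u x₀ ^ p = 0 :=
  ⟨ψ, _, _, .of_eventuallyEq hu, hasSecondDerivAt_of_ode hψ hpos, by positivity, by
    rw [hu.self_of_nhds]; field_simp; norm_num⟩

theorem exists_isViscositySolution_of_ode {N : ℕ} (hk : 0 < k) (hkN : k < N) (hp : 0 < p)
    {ψ : ℝ → ℝ} (hψ : ∀ s, 0 ≤ s → ∀ᶠ t in 𝓝 s, HasDerivAt ψ (-ψ t ^ p / (2 * k)) t)
    (hpos : ∀ s, 0 ≤ s → 0 < ψ s) :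
    ∃ u : EuclideanSpace ℝ (Fin N) → ℝ, Continuous u ∧ (∀ x, 0 ≤ u x) ∧ (∃ x, u x ≠ 0) ∧
      IsViscositySolution (Pminus k) (fun t => t ^ p) univ u := by
  refine ⟨fun x => ψ (‖x‖ ^ 2), ?_, fun x => (hpos _ (by positivity)).le,
    ⟨0, by simpa using (hpos 0 le_rfl).ne'⟩,
    isViscositySolution_Pminus_of_radialContact hkN fun x₀ =>
      exists_radialContact_of_ode hk.ne' hp (.of_forall fun _ => rfl) (hψ _ (by positivity))
        (hpos _ (by positivity))⟩
  exact continuous_iff_continuousAt.2 fun x =>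
    (hψ _ (by positivity)).self_of_nhds.continuousAt.comp (continuous_norm.pow 2).continuousAt

theorem hasDerivAt_exp_neg_div (k : ℕ) (t : ℝ) :
    HasDerivAt (fun s => Real.exp (-s / (2 * k)))
      (-Real.exp (-t / (2 * k)) ^ (1 : ℝ) / (2 * k)) t := by
  have := ((hasDerivAt_id t).neg.div_const (2 * k : ℝ)).exp
  refine this.congr_deriv ?_
  simp only [Pi.neg_apply, id, Real.rpow_one]
  ring

/-- Solves `2k ψ' + ψ^p = 0` where `(1 - p) (d - s) > 0`. -/
noncomputable def powerProfile (k : ℕ) (p d s : ℝ) : ℝ :=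
  ((1 - p) / (2 * (k : ℝ)) * (d - s)) ^ (1 / (1 - p))

theorem powerProfile_pos {d s : ℝ} (hs : 0 < (1 - p) / (2 * (k : ℝ)) * (d - s)) :
    0 < powerProfile k p d s :=
  Real.rpow_pos_of_pos hs _

theorem eventually_hasDerivAt_powerProfile (hk : k ≠ 0) (hp : p ≠ 1) {d s : ℝ}
    (hs : 0 < (1 - p) / (2 * (k : ℝ)) * (d - s)) :
    ∀ᶠ t in 𝓝 s, HasDerivAt (powerProfile k p d) (-powerProfile k p d t ^ p / (2 * k)) t := by
  have hcont : Continuous fun t : ℝ => (1 - p) / (2 * (k : ℝ)) * (d - t) := by fun_prop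
  filter_upwards [(hcont.tendsto s).eventually_const_lt hs] with t ht
  have h1p : 1 - p ≠ 0 := sub_ne_zero.2 hp.symm
  have := (((hasDerivAt_id t).const_sub d).const_mul ((1 - p) / (2 * (k : ℝ)))).rpow_const
    (p := 1 / (1 - p)) (Or.inl ht.ne')
  refine this.congr_deriv ?_
  rw [id, powerProfile, ← Real.rpow_mul ht.le,
    show 1 / (1 - p) * p = 1 / (1 - p) - 1 by field_simp; ring]
  field_simp

end Profiles

section CompactSolution

variable {N k : ℕ} {p R : ℝ}

noncomputable def compactSolution (N k : ℕ) (p R : ℝ) (x : EuclideanSpace ℝ (Fin N)) : ℝ :=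
  if ‖x‖ ≤ R then powerProfile k p (R ^ 2) (‖x‖ ^ 2) else 0

theorem compactSolution_eq_zero (hp : p < 1) {x : EuclideanSpace ℝ (Fin N)} (hx : R ≤ ‖x‖) :
    compactSolution N k p R x = 0 := by
  rw [compactSolution]
  split_ifs with h
  · rw [powerProfile, le_antisymm h hx, sub_self, mul_zero,
      Real.zero_rpow (one_div_ne_zero (sub_ne_zero.2 hp.ne'))]
  · rfl

theorem compactSolution_nonneg (hp : p < 1) (x : EuclideanSpace ℝ (Fin N)) :
    0 ≤ compactSolution N k p R x := by
  rw [compactSolution]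
  split_ifs with h
  · exact Real.rpow_nonneg (mul_nonneg (div_nonneg (by linarith) (by positivity))
      (sub_nonneg.2 (pow_le_pow_left₀ (norm_nonneg x) h 2))) _
  · rfl

theorem continuous_compactSolution (hp : p < 1) :
    Continuous (compactSolution N k p R) := by
  refine Continuous.if_le ?_ continuous_const continuous_norm continuous_const
    fun x hx => compactSolution_eq_zero hp hx.ge |>.symm.trans (if_pos hx.le) |>.symm
  exact (by fun_prop : Continuous fun x : EuclideanSpace ℝ (Fin N) =>
    (1 - p) / (2 * (k : ℝ)) * (R ^ 2 - ‖x‖ ^ 2)).rpow_const fun _ =>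
      Or.inr (one_div_nonneg.2 (by linarith))

theorem compactSolution_zero_ne_zero (hk : 0 < k) (hp : p < 1) (hR : 0 < R) :
    compactSolution N k p R 0 ≠ 0 := by
  rw [compactSolution, if_pos (by simpa using hR.le)]
  refine (powerProfile_pos ?_).ne'
  rw [norm_zero, zero_pow two_ne_zero, sub_zero]
  exact mul_pos (div_pos (by linarith) (by positivity)) (by positivity)

theorem compactSolution_isViscositySolution (hk : 0 < k) (hkN : k < N) (hp : 0 < p)
    (hp1 : p < 1) :
    IsViscositySolution (Pminus k) (fun t => t ^ p) univ (compactSolution N k p R) := by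
  refine isViscositySolution_Pminus_of_radialContact hkN fun x₀ => ?_
  rcases lt_or_ge ‖x₀‖ R with hx₀ | hx₀
  · have hu : ∀ᶠ x in 𝓝 x₀, compactSolution N k p R x = powerProfile k p (R ^ 2) (‖x‖ ^ 2) :=
      (continuous_norm.tendsto x₀).eventually_lt_const hx₀ |>.mono fun x hx => if_pos hx.le
    have hs : 0 < (1 - p) / (2 * (k : ℝ)) * (R ^ 2 - ‖x₀‖ ^ 2) :=
      mul_pos (div_pos (by linarith) (by positivity)) (by nlinarith [norm_nonneg x₀])
    exact exists_radialContact_of_ode hk.ne' hp hu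
      (eventually_hasDerivAt_powerProfile hk.ne' hp1.ne hs) (powerProfile_pos hs)
  · refine ⟨fun _ => 0, fun _ => 0, 0, ⟨?_, ?_, ?_⟩, hasSecondDerivAt_const 0 _, le_rfl, ?_⟩
    · exact compactSolution_eq_zero hp1 hx₀
    · exact .of_forall fun x => compactSolution_nonneg hp1 x
    · exact .of_forall fun x hx =>
        (compactSolution_eq_zero hp1 (hx₀.trans (norm_le_norm_of_inner_sub_eq_zero hx))).le
    · simp [compactSolution_eq_zero hp1 hx₀, Real.zero_rpow hp.ne']

theorem compactSolution_spec (hk : 0 < k) (hkN : k < N) (hp : 0 < p) (hp1 : p < 1) (hR : 0 < R) :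
    Continuous (compactSolution N k p R) ∧ (∀ x, 0 ≤ compactSolution N k p R x) ∧
      (∃ x, compactSolution N k p R x ≠ 0) ∧
      IsViscositySolution (Pminus k) (fun t => t ^ p) univ (compactSolution N k p R) :=
  ⟨continuous_compactSolution hp1, compactSolution_nonneg hp1,
    ⟨0, compactSolution_zero_ne_zero hk hp1 hR⟩,
    compactSolution_isViscositySolution hk hkN hp hp1⟩

end CompactSolution

theorem statement3 (N k : ℕ) (hk : 0 < k) (hkN : k < N) (p : ℝ) (hp : 0 < p) :
    (∃ u : EuclideanSpace ℝ (Fin N) → ℝ, Continuous u ∧ (∀ x, 0 ≤ u x) ∧ (∃ x, u x ≠ 0) ∧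
      IsViscositySolution (Pminus k) (fun t => t ^ p) Set.univ u) ∧
    (p < 1 → ∀ R : ℝ, 0 < R →
      let u : EuclideanSpace ℝ (Fin N) → ℝ := fun x =>
        if ‖x‖ ≤ R then ((1 - p) / (2 * (k : ℝ)) * (R ^ 2 - ‖x‖ ^ 2)) ^ (1 / (1 - p)) else 0
      Continuous u ∧ (∀ x, 0 ≤ u x) ∧ (∃ x, u x ≠ 0) ∧
        IsViscositySolution (Pminus k) (fun t => t ^ p) Set.univ u) := by
  refine ⟨?_, fun hp1 R hR => compactSolution_spec hk hkN hp hp1 hR⟩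
  rcases lt_trichotomy p 1 with hp1 | rfl | hp1
  · exact ⟨_, compactSolution_spec hk hkN hp hp1 one_pos⟩
  · exact exists_isViscositySolution_of_ode hk hkN one_pos
      (fun _ _ => .of_forall (hasDerivAt_exp_neg_div k)) fun _ _ => Real.exp_pos _
  · have hs : ∀ s : ℝ, 0 ≤ s → 0 < (1 - p) / (2 * (k : ℝ)) * (-1 - s) := fun s hs =>
      mul_pos_of_neg_of_neg (div_neg_of_neg_of_pos (by linarith) (by positivity)) (by linarith)
    exact exists_isViscositySolution_of_ode hk hkN hp
      (fun s hs' => eventually_hasDerivAt_powerProfile hk.ne' hp1.ne' (hs s hs'))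
      fun s hs' => powerProfile_pos (hs s hs')
end

section
/- Let N and k be positive integers with 2 ≤ k ≤ N, and let u : ℝ^N → ℝ be nonnegative, lower semicontinuous, and a viscosity supersolution of P⁺_k(D²u) = 0 in ℝ^N. Set m(r) = min_{|x| ≤ r} u(x). Then the map r ↦ m(r)·r^{k−2} is nondecreasing on [0, +∞). -/
open scoped BigOperators

/-! For `γ > 0` the Hessian of `c ‖x‖^(-γ)` at `x ≠ 0` has the eigenvalue `c γ (γ + 1) ‖x‖^(-γ-2)`
in the radial direction and `-c γ ‖x‖^(-γ-2)` in the orthogonal ones, so `P⁺_k` of it is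
`c γ (γ + 2 - k) ‖x‖^(-γ-2)`, positive when `c > 0` and `γ > k - 2`. Such a strict subsolution
cannot touch the supersolution `u` from below at an interior point. Comparing `u` on the annulus
`r ≤ ‖x‖ ≤ S` with `m(r) r^γ (‖x‖^(-γ) - S^(-γ))` and letting `S → ∞` gives
`u(x) ≥ m(r) (r / ‖x‖)^γ` for `‖x‖ ≥ r`, hence `m(r) r^γ ≤ m(s) s^γ`. Letting `γ ↓ k - 2` proves
the claim for `r > 0`, and lower semicontinuity of `u` at the origin extends it to `r = 0`. -/

open Filter Topology Finset Metric Set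

section

open Matrix

theorem Fin.card_filter_sub_le_val {n k : ℕ} (hk : k ≤ n) : #{i : Fin n | n - k ≤ (i : ℕ)} = k := by
  have h := card_filter_add_card_filter_not (s := univ) fun i : Fin n => (i : ℕ) < n - k
  simp only [Fin.card_filter_val_lt, not_lt, card_univ, Fintype.card_fin] at h
  omega

theorem add_mul_le_sum_top_of_monotone {n k : ℕ} (hk : 1 ≤ k) (hkn : k ≤ n) {w : Fin n → ℝ}
    (hw : Monotone w) {c μ : ℝ} (hc : ∀ i, c ≤ w i) {j : Fin n} (hμ : μ ≤ w j) :
    μ + (k - 1) * c ≤ ∑ i : Fin n, if n - k ≤ (i : ℕ) then w i else 0 := by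
  set s : Finset (Fin n) := {i | n - k ≤ (i : ℕ)}
  let last : Fin n := ⟨n - 1, by omega⟩
  have hlast : last ∈ s := by
    simp only [s, Finset.mem_filter, Finset.mem_univ, true_and, last]; omega
  rw [← sum_filter, ← add_sum_erase _ _ hlast]
  have hrest := card_nsmul_le_sum (s.erase last) w c fun i _ => hc i
  rw [card_erase_of_mem hlast, Fin.card_filter_sub_le_val hkn, nsmul_eq_mul,
    Nat.cast_sub hk, Nat.cast_one] at hrest
  have hμlast : μ ≤ w last := hμ.trans (hw (Fin.mk_le_mk.mpr (by omega)))
  linarith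

theorem le_Pplus_of_le_eigenvalues {n k : ℕ} (hk : 1 ≤ k) (hkn : k ≤ n)
    {A : Matrix (Fin n) (Fin n) ℝ} (hA : A.IsHermitian) {c μ : ℝ}
    (hc : ∀ i, c ≤ hA.eigenvalues i) {j : Fin n} (hμ : μ ≤ hA.eigenvalues j) :
    μ + (k - 1) * c ≤ Pplus k A := by
  rw [Pplus, sortedEig, dif_pos hA]
  refine add_mul_le_sum_top_of_monotone (j := (Tuple.sort hA.eigenvalues)⁻¹ j) hk hkn
    (Tuple.monotone_sort _) (fun i => hc _) ?_
  simpa using hμ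

theorem isHermitian_smul_one_add_smul_vecMulVec {n : Type*} [Fintype n] [DecidableEq n]
    (c₁ c₂ : ℝ) (y : n → ℝ) : (c₁ • 1 + c₂ • vecMulVec y y).IsHermitian := by
  refine (isHermitian_one.smul (.all c₁)).add (IsHermitian.smul ?_ (.all c₂))
  simpa using (posSemidef_vecMulVec_self_star y).isHermitian

theorem smul_one_add_smul_vecMulVec_mulVec {n : Type*} [Fintype n] [DecidableEq n]
    (c₁ c₂ : ℝ) (y v : n → ℝ) :
    (c₁ • 1 + c₂ • vecMulVec y y) *ᵥ v = c₁ • v + (c₂ * (y ⬝ᵥ v)) • y := by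
  rw [add_mulVec, smul_mulVec, smul_mulVec, one_mulVec, vecMulVec_mulVec,
    op_smul_eq_smul, smul_smul]

theorem Matrix.IsHermitian.le_eigenvalues_smul_one_add_smul_vecMulVec {n : Type*} [Fintype n]
    [DecidableEq n] {c₁ c₂ : ℝ} {y : n → ℝ} (hc₂ : 0 ≤ c₂)
    (hM : (c₁ • 1 + c₂ • vecMulVec y y).IsHermitian) (i : n) : c₁ ≤ hM.eigenvalues i := by
  rw [hM.eigenvalues_eq, smul_one_add_smul_vecMulVec_mulVec]
  set v := hM.eigenvectorBasis i
  have hv : ⇑v ⬝ᵥ ⇑v = 1 := by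
    have h := real_inner_self_eq_norm_sq v
    rw [hM.eigenvectorBasis.orthonormal.1 i, EuclideanSpace.inner_eq_star_dotProduct] at h
    simpa using h
  simp only [RCLike.re_to_real, star_trivial, dotProduct_add, dotProduct_smul, smul_eq_mul, hv,
    dotProduct_comm (⇑v) y]
  nlinarith [mul_nonneg hc₂ (mul_self_nonneg (y ⬝ᵥ ⇑v))]

theorem Matrix.IsHermitian.exists_eigenvalues_smul_one_add_smul_vecMulVec_eq {n : Type*} [Fintype n]
    [DecidableEq n] {c₁ c₂ : ℝ} {y : n → ℝ} (hy : y ≠ 0)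
    (hM : (c₁ • 1 + c₂ • vecMulVec y y).IsHermitian) :
    ∃ j, hM.eigenvalues j = c₁ + c₂ * (y ⬝ᵥ y) := by
  have heig : Module.End.HasEigenvector (toLin' (c₁ • 1 + c₂ • vecMulVec y y))
      (c₁ + c₂ * (y ⬝ᵥ y)) y := by
    refine ⟨?_, hy⟩
    rw [Module.End.mem_genEigenspace_one, toLin'_apply, smul_one_add_smul_vecMulVec_mulVec,
      add_smul]
  have := (Module.End.hasEigenvalue_of_hasEigenvector heig).mem_spectrum
  rw [spectrum_toLin', hM.spectrum_real_eq_range_eigenvalues] at this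
  exact this

theorem le_Pplus_smul_one_add_smul_vecMulVec {N k : ℕ} (hk : 1 ≤ k) (hkN : k ≤ N)
    {c₁ c₂ : ℝ} (hc₂ : 0 ≤ c₂) {y : Fin N → ℝ} (hy : y ≠ 0) :
    k * c₁ + c₂ * (y ⬝ᵥ y) ≤ Pplus k (c₁ • 1 + c₂ • vecMulVec y y) := by
  have hM := isHermitian_smul_one_add_smul_vecMulVec c₁ c₂ y
  obtain ⟨j, hj⟩ := hM.exists_eigenvalues_smul_one_add_smul_vecMulVec_eq hy
  have := le_Pplus_of_le_eigenvalues hk hkN hM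
    (hM.le_eigenvalues_smul_one_add_smul_vecMulVec hc₂) hj.ge
  linarith

end

theorem fderiv_fderiv_apply_of_eventuallyEq_comp_normSq {E : Type*} [NormedAddCommGroup E]
    [InnerProductSpace ℝ E] {g g' : ℝ → ℝ} {g'' : ℝ} {y : E}
    {φ : E → ℝ} (hg : ∀ᶠ t in 𝓝 (‖y‖ ^ 2), HasDerivAt g (g' t) t)
    (hg' : HasDerivAt g' g'' (‖y‖ ^ 2)) (hφ : φ =ᶠ[𝓝 y] fun x => g (‖x‖ ^ 2)) (v w : E) :
    fderiv ℝ (fderiv ℝ φ) y v w =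
      2 * g' (‖y‖ ^ 2) * inner ℝ v w + 4 * g'' * inner ℝ y v * inner ℝ y w := by
  have hq : ∀ x : E, HasFDerivAt (fun x => ‖x‖ ^ 2) (2 • innerSL ℝ x) x := fun x =>
    (hasStrictFDerivAt_norm_sq x).hasFDerivAt
  have hDφ : fderiv ℝ φ =ᶠ[𝓝 y] fun x => g' (‖x‖ ^ 2) • (2 • innerSL ℝ x) := by
    have hg_near : ∀ᶠ x in 𝓝 y, HasDerivAt g (g' (‖x‖ ^ 2)) (‖x‖ ^ 2) :=
      (continuous_norm.pow 2).continuousAt.eventually hg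
    filter_upwards [hφ.eventuallyEq_nhds, hg_near] with x hφx hgx
    exact ((hgx.comp_hasFDerivAt x (hq x)).congr_of_eventuallyEq hφx).fderiv
  have hD : HasFDerivAt (fun x => g' (‖x‖ ^ 2) • (2 • innerSL ℝ x))
      (g' (‖y‖ ^ 2) • (2 • innerSL ℝ : E →L[ℝ] E →L[ℝ] ℝ) +
        (g'' • 2 • innerSL ℝ y).smulRight (2 • innerSL ℝ y)) y :=
    (hg'.comp_hasFDerivAt y (hq y)).smul (2 • innerSL ℝ : E →L[ℝ] E →L[ℝ] ℝ).hasFDerivAt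
  rw [hDφ.fderiv_eq, hD.fderiv]
  simp only [add_apply, smul_apply, ContinuousLinearMap.smulRight_apply, nsmul_eq_mul,
    Nat.cast_ofNat, smul_eq_mul, coe_innerSL_apply]
  rw [← innerSL_apply_apply ℝ v w]
  ring

theorem hessianMatrix_of_eventuallyEq_comp_normSq {N : ℕ} {g g' : ℝ → ℝ} {g'' : ℝ}
    {y : EuclideanSpace ℝ (Fin N)} {φ : EuclideanSpace ℝ (Fin N) → ℝ}
    (hg : ∀ᶠ t in 𝓝 (‖y‖ ^ 2), HasDerivAt g (g' t) t)
    (hg' : HasDerivAt g' g'' (‖y‖ ^ 2)) (hφ : φ =ᶠ[𝓝 y] fun x => g (‖x‖ ^ 2)) :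
    hessianMatrix φ y = (2 * g' (‖y‖ ^ 2)) • 1 + (4 * g'') • Matrix.vecMulVec y y := by
  ext i j
  simp [hessianMatrix, iteratedFDeriv_two_apply,
    fderiv_fderiv_apply_of_eventuallyEq_comp_normSq hg hg' hφ, Matrix.one_apply,
    Matrix.vecMulVec_apply, EuclideanSpace.inner_single_right, eq_comm]
  ring

open Matrix in
theorem Pplus_hessianMatrix_pos_of_eventuallyEq {N k : ℕ} (hk : 1 ≤ k) (hkN : k ≤ N)
    {γ c d : ℝ} (hγ : 0 < γ) (hkγ : k - 2 < γ) (hc : 0 < c) {y : EuclideanSpace ℝ (Fin N)}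
    (hy : y ≠ 0) {φ : EuclideanSpace ℝ (Fin N) → ℝ}
    (hφ : φ =ᶠ[𝓝 y] fun x => c * (‖x‖ ^ 2) ^ (-γ / 2) + d) :
    0 < Pplus k (hessianMatrix φ y) := by
  set p := -γ / 2
  set Q := ‖y‖ ^ 2
  have hQ : 0 < Q := by positivity
  have hg : ∀ᶠ t in 𝓝 Q, HasDerivAt (fun t => c * t ^ p + d) (c * (p * t ^ (p - 1))) t :=
    (eventually_ne_nhds hQ.ne').mono fun t ht =>
      ((Real.hasDerivAt_rpow_const (Or.inl ht)).const_mul c).add_const d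
  have hg' : HasDerivAt (fun t => c * (p * t ^ (p - 1)))
      (c * (p * ((p - 1) * Q ^ (p - 1 - 1)))) Q :=
    ((Real.hasDerivAt_rpow_const (Or.inl hQ.ne')).const_mul p).const_mul c
  rw [hessianMatrix_of_eventuallyEq_comp_normSq hg hg' hφ]
  set X := Q ^ (p - 1 - 1)
  have hX : 0 < X := by positivity
  have hQX : Q ^ (p - 1) = X * Q := by rw [← Real.rpow_add_one hQ.ne']; ring_nf
  have hyy : ⇑y ⬝ᵥ ⇑y = Q := by
    rw [show Q = ‖y‖ ^ 2 from rfl, ← real_inner_self_eq_norm_sq,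
      EuclideanSpace.inner_eq_star_dotProduct, star_trivial]
  have hc₂ : 4 * (c * (p * ((p - 1) * X))) = c * γ * (γ + 2) * X := by ring
  refine lt_of_lt_of_le ?_ (le_Pplus_smul_one_add_smul_vecMulVec hk hkN
    (hc₂ ▸ by positivity) (y := ⇑y) (by simpa using hy))
  rw [hyy, hQX, hc₂]
  have hkγ' : 0 < γ + 2 - k := by linarith
  calc (0 : ℝ) < c * γ * X * Q * (γ + 2 - k) := by positivity
    _ = k * (2 * (c * (p * (X * Q)))) + c * γ * (γ + 2) * X * Q := by ring

open scoped ContDiff in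
theorem exists_contDiff_pos_eq_of_le {b : ℝ} (hb : 0 < b) :
    ∃ σ : ℝ → ℝ, ContDiff ℝ ∞ σ ∧ (∀ t, 0 < σ t) ∧ ∀ t, b ≤ t → σ t = t := by
  refine ⟨fun t => b / 2 + (t - b / 2) * Real.smoothTransition (2 * t / b - 1), ?_, ?_, ?_⟩
  · have := Real.smoothTransition.contDiff (n := ⊤)
    fun_prop
  · intro t
    dsimp only
    rcases le_or_gt t (b / 2) with ht | ht
    · rw [Real.smoothTransition.zero_of_nonpos, mul_zero, add_zero]
      · positivity
      · rw [sub_nonpos, div_le_one hb]; linarith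
    · have := Real.smoothTransition.nonneg (2 * t / b - 1)
      have : 0 < t - b / 2 := by linarith
      positivity
  · intro t ht
    dsimp only
    rw [Real.smoothTransition.one_of_one_le]
    · ring
    · rw [le_sub_iff_add_le, le_div_iff₀ hb]; linarith

theorem exists_contDiff_Pplus_hessianMatrix_pos {N k : ℕ} (hk : 1 ≤ k) (hkN : k ≤ N)
    {r γ c d : ℝ} (hr : 0 < r) (hγ : 0 < γ) (hkγ : k - 2 < γ) (hc : 0 < c) :
    ∃ φ : EuclideanSpace ℝ (Fin N) → ℝ, ContDiff ℝ 2 φ ∧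
      (∀ x, r ≤ ‖x‖ → φ x = c * ‖x‖ ^ (-γ) + d) ∧
      ∀ x, r < ‖x‖ → 0 < Pplus k (hessianMatrix φ x) := by
  obtain ⟨σ, hσ, hσ_pos, hσ_eq⟩ := exists_contDiff_pos_eq_of_le (pow_pos hr 2)
  have hσ_norm : ∀ x : EuclideanSpace ℝ (Fin N), r ≤ ‖x‖ → σ (‖x‖ ^ 2) = ‖x‖ ^ 2 := fun x hx =>
    hσ_eq _ (pow_le_pow_left₀ hr.le hx 2)
  refine ⟨fun x => c * σ (‖x‖ ^ 2) ^ (-γ / 2) + d, ?_, fun x hx => ?_, fun x hx => ?_⟩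
  · exact (contDiff_const.mul
      (((hσ.of_le (by norm_cast)).comp (contDiff_norm_sq ℝ)).rpow_const_of_ne
        fun x => (hσ_pos _).ne')).add contDiff_const
  · dsimp only
    rw [hσ_norm x hx, ← Real.rpow_natCast, ← Real.rpow_mul (norm_nonneg x)]
    rw [show ((2 : ℕ) : ℝ) * (-γ / 2) = -γ by push_cast; ring]
  · refine Pplus_hessianMatrix_pos_of_eventuallyEq (d := d) hk hkN hγ hkγ hc
      (norm_pos_iff.mp (hr.trans hx)) ?_
    filter_upwards [(isOpen_lt continuous_const continuous_norm).mem_nhds hx] with z hz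
    rw [hσ_norm z hz.le]

theorem IsViscositySupersolution.le_of_le_on_diff {N : ℕ} {F : Matrix (Fin N) (Fin N) ℝ → ℝ}
    {u φ : EuclideanSpace ℝ (Fin N) → ℝ} {K U : Set (EuclideanSpace ℝ (Fin N))}
    (hsuper : IsViscositySupersolution F (fun _ => 0) Set.univ u) (hu : LowerSemicontinuous u)
    (hK : IsCompact K) (hU : IsOpen U) (hUK : U ⊆ K) (hφ : ContDiff ℝ 2 φ)
    (hF : ∀ x ∈ U, 0 < F (hessianMatrix φ x)) (hKU : ∀ x ∈ K \ U, φ x ≤ u x) :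
    ∀ x ∈ K, φ x ≤ u x := by
  intro x hx
  have hlsc : LowerSemicontinuous fun z => u z - φ z := by
    have := hu.add (continuous_neg.comp hφ.continuous).lowerSemicontinuous
    simpa [sub_eq_add_neg] using this
  obtain ⟨y, hyK, hmin⟩ := (hlsc.lowerSemicontinuousOn K).exists_isMinOn ⟨x, hx⟩ hK
  by_contra! hlt
  have hy : u y - φ y < 0 := (hmin hx).trans_lt (sub_neg.mpr hlt)
  have hyU : y ∈ U := by
    by_contra hyU
    linarith [hKU y ⟨hyK, hyU⟩]
  have := hsuper y trivial φ hφ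
    ((hmin.isLocalMin (Filter.mem_of_superset (hU.mem_nhds hyU) hUK)).on Set.univ)
  linarith [hF y hyU]

theorem LowerSemicontinuous.exists_sInf_image_eq_isMinOn {X : Type*} [TopologicalSpace X]
    {u : X → ℝ} (hu : LowerSemicontinuous u) {K : Set X} (hK : IsCompact K) (hne : K.Nonempty) :
    ∃ x ∈ K, sInf (u '' K) = u x ∧ IsMinOn u K x := by
  obtain ⟨x, hx, hmin⟩ := (hu.lowerSemicontinuousOn K).exists_isMinOn hne hK
  exact ⟨x, hx, IsLeast.csInf_eq ⟨mem_image_of_mem u hx, forall_mem_image.2 fun y hy => hmin hy⟩,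
    hmin⟩

theorem LowerSemicontinuous.tendsto_sInf_image_closedBall {X : Type*} [PseudoMetricSpace X]
    [ProperSpace X] {u : X → ℝ} (hu : LowerSemicontinuous u) (x₀ : X) :
    Tendsto (fun ρ => sInf (u '' closedBall x₀ ρ)) (𝓝[>] 0) (𝓝 (u x₀)) := by
  have hmin : ∀ ρ : ℝ, 0 < ρ → ∃ x ∈ closedBall x₀ ρ,
      sInf (u '' closedBall x₀ ρ) = u x ∧ IsMinOn u (closedBall x₀ ρ) x := fun ρ hρ =>
    hu.exists_sInf_image_eq_isMinOn (isCompact_closedBall x₀ ρ) (nonempty_closedBall.2 hρ.le)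
  refine tendsto_order.2 ⟨fun a ha => ?_, fun a ha => ?_⟩
  · obtain ⟨ε, hε, hball⟩ := Metric.eventually_nhds_iff.1 (hu x₀ a ha)
    filter_upwards [Ioo_mem_nhdsGT hε] with ρ hρ
    obtain ⟨x, hx, hx_eq, -⟩ := hmin ρ hρ.1
    exact hx_eq ▸ hball ((mem_closedBall.1 hx).trans_lt hρ.2)
  · filter_upwards [self_mem_nhdsWithin] with ρ (hρ : 0 < ρ)
    obtain ⟨x, -, hx_eq, hx_min⟩ := hmin ρ hρ
    exact hx_eq ▸ (hx_min (mem_closedBall_self hρ.le)).trans_lt ha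

namespace IsViscositySupersolution

variable {N k : ℕ} {u : EuclideanSpace ℝ (Fin N) → ℝ}

theorem mul_rpow_neg_norm_le (hsuper : IsViscositySupersolution (Pplus k) (fun _ => 0) univ u)
    (hu : LowerSemicontinuous u) (hnn : ∀ x, 0 ≤ u x) (hk : 1 ≤ k) (hkN : k ≤ N)
    {r γ c : ℝ} (hr : 0 < r) (hγ : 0 < γ) (hkγ : k - 2 < γ) (hc : 0 ≤ c)
    (hsphere : ∀ x, ‖x‖ = r → c * r ^ (-γ) ≤ u x) {x : EuclideanSpace ℝ (Fin N)}
    (hx : r ≤ ‖x‖) : c * ‖x‖ ^ (-γ) ≤ u x := by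
  rcases hc.eq_or_lt with rfl | hc
  · simpa using hnn x
  have hS : ∀ S, ‖x‖ < S → c * ‖x‖ ^ (-γ) + -(c * S ^ (-γ)) ≤ u x := by
    intro S hS
    obtain ⟨φ, hφ, hφ_eq, hφ_pos⟩ :=
      exists_contDiff_Pplus_hessianMatrix_pos (N := N) (d := -(c * S ^ (-γ))) hk hkN hr hγ hkγ hc
    rw [← hφ_eq x hx]
    refine hsuper.le_of_le_on_diff hu (K := closedBall 0 S ∩ {z | r ≤ ‖z‖})
      (U := {z | r < ‖z‖ ∧ ‖z‖ < S}) ?_ ?_ ?_ hφ (fun z hz => hφ_pos z hz.1) ?_ x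
      ⟨mem_closedBall_zero_iff.2 hS.le, hx⟩
    · exact (isCompact_closedBall _ _).inter_right (isClosed_le continuous_const continuous_norm)
    · exact (isOpen_lt continuous_const continuous_norm).inter
        (isOpen_lt continuous_norm continuous_const)
    · exact fun z hz => ⟨mem_closedBall_zero_iff.2 hz.2.le, hz.1.le⟩
    · rintro z ⟨⟨hzS, hrz : r ≤ ‖z‖⟩, hzU⟩
      rw [mem_closedBall_zero_iff] at hzS
      rw [hφ_eq z hrz]
      rcases hrz.eq_or_lt with hzr | hzr
      · have hS_pos : 0 < c * S ^ (-γ) :=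
          mul_pos hc (Real.rpow_pos_of_pos (hr.trans_le (hx.trans hS.le)) _)
        rw [← hzr]
        linarith [hsphere z hzr.symm]
      · rw [hzS.eq_or_lt.resolve_right fun h => hzU ⟨hzr, h⟩, add_neg_cancel]
        exact hnn z
  have hlim : Tendsto (fun S => c * ‖x‖ ^ (-γ) + -(c * S ^ (-γ))) atTop (𝓝 (c * ‖x‖ ^ (-γ))) := by
    simpa using (((tendsto_rpow_neg_atTop hγ).const_mul c).neg.const_add (c * ‖x‖ ^ (-γ)))
  exact le_of_tendsto hlim ((eventually_gt_atTop _).mono hS)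

theorem sInf_closedBall_mul_rpow_le
    (hsuper : IsViscositySupersolution (Pplus k) (fun _ => 0) univ u)
    (hu : LowerSemicontinuous u) (hnn : ∀ x, 0 ≤ u x) (hk : 1 ≤ k) (hkN : k ≤ N)
    {r s γ : ℝ} (hr : 0 < r) (hrs : r ≤ s) (hγ : 0 < γ) (hkγ : k - 2 < γ) :
    sInf (u '' closedBall 0 r) * r ^ γ ≤ sInf (u '' closedBall 0 s) * s ^ γ := by
  have hs := hr.trans_le hrs
  obtain ⟨xr, -, hmr, hminr⟩ :=
    hu.exists_sInf_image_eq_isMinOn (isCompact_closedBall 0 r) (nonempty_closedBall.2 hr.le)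
  obtain ⟨xs, hxs, hms, -⟩ :=
    hu.exists_sInf_image_eq_isMinOn (isCompact_closedBall 0 s) (nonempty_closedBall.2 hs.le)
  rw [hmr, hms]
  set c := u xr * r ^ γ
  have hc : 0 ≤ c := mul_nonneg (hnn xr) (Real.rpow_nonneg hr.le γ)
  have hcr : c * r ^ (-γ) = u xr := by
    rw [Real.rpow_neg hr.le, mul_inv_cancel_right₀ (Real.rpow_pos_of_pos hr γ).ne']
  have hanti : ∀ {a b : ℝ}, 0 < a → a ≤ b → c * b ^ (-γ) ≤ c * a ^ (-γ) := fun ha hab =>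
    mul_le_mul_of_nonneg_left (Real.rpow_le_rpow_of_nonpos ha hab (by linarith)) hc
  suffices c * s ^ (-γ) ≤ u xs by
    rwa [Real.rpow_neg hs.le, ← div_eq_mul_inv, div_le_iff₀ (Real.rpow_pos_of_pos hs γ)] at this
  rcases le_or_gt ‖xs‖ r with hxr | hxr
  · calc c * s ^ (-γ) ≤ c * r ^ (-γ) := hanti hr hrs
      _ = u xr := hcr
      _ ≤ u xs := hminr (mem_closedBall_zero_iff.2 hxr)
  · calc c * s ^ (-γ) ≤ c * ‖xs‖ ^ (-γ) := hanti (hr.trans hxr) (mem_closedBall_zero_iff.1 hxs)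
      _ ≤ u xs := hsuper.mul_rpow_neg_norm_le hu hnn hk hkN hr hγ hkγ hc
          (fun x hx => hcr ▸ hminr (mem_closedBall_zero_iff.2 hx.le)) hxr.le

theorem sInf_closedBall_mul_rpow_sub_two_le
    (hsuper : IsViscositySupersolution (Pplus k) (fun _ => 0) univ u)
    (hu : LowerSemicontinuous u) (hnn : ∀ x, 0 ≤ u x) (hk : 2 ≤ k) (hkN : k ≤ N)
    {r s : ℝ} (hr : 0 < r) (hrs : r ≤ s) :
    sInf (u '' closedBall 0 r) * r ^ ((k : ℝ) - 2) ≤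
      sInf (u '' closedBall 0 s) * s ^ ((k : ℝ) - 2) := by
  have hcont : ∀ ρ : ℝ, 0 < ρ →
      Tendsto (fun γ => sInf (u '' closedBall 0 ρ) * ρ ^ γ) (𝓝[>] ((k : ℝ) - 2))
        (𝓝 (sInf (u '' closedBall 0 ρ) * ρ ^ ((k : ℝ) - 2))) := fun ρ hρ =>
    (continuousAt_const.mul (Real.continuousAt_const_rpow hρ.ne')).tendsto.mono_left
      nhdsWithin_le_nhds
  refine le_of_tendsto_of_tendsto (hcont r hr) (hcont s (hr.trans_le hrs)) ?_
  filter_upwards [self_mem_nhdsWithin] with γ (hγ : (k : ℝ) - 2 < γ)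
  have hk' : (2 : ℝ) ≤ k := by exact_mod_cast hk
  exact hsuper.sInf_closedBall_mul_rpow_le hu hnn (by omega) hkN hr hrs (by linarith) hγ

end IsViscositySupersolution

theorem statement16 (N k : ℕ) (hk : 2 ≤ k) (hkN : k ≤ N)
    (u : EuclideanSpace ℝ (Fin N) → ℝ) (hnn : ∀ x, 0 ≤ u x)
    (hlsc : LowerSemicontinuous u)
    (hsuper : IsViscositySupersolution (Pplus k) (fun _ => 0) Set.univ u)
    (m : ℝ → ℝ) (hm : ∀ r : ℝ, m r = sInf (u '' Metric.closedBall 0 r)) :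
    ∀ r s : ℝ, 0 ≤ r → r ≤ s →
      m r * r ^ ((k : ℝ) - 2) ≤ m s * s ^ ((k : ℝ) - 2) := by
  intro r s hr hrs
  simp only [hm]
  rcases hr.eq_or_lt with rfl | hr
  · rcases hrs.eq_or_lt with rfl | hs
    · exact le_rfl
    have hk' : (0 : ℝ) ≤ k - 2 := sub_nonneg.2 (by exact_mod_cast hk)
    have hlim : Tendsto (fun ρ => sInf (u '' closedBall 0 ρ) * ρ ^ ((k : ℝ) - 2)) (𝓝[>] 0)
        (𝓝 (sInf (u '' closedBall 0 0) * 0 ^ ((k : ℝ) - 2))) := by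
      rw [closedBall_zero, image_singleton, csInf_singleton]
      exact (hlsc.tendsto_sInf_image_closedBall 0).mul
        ((Real.continuousAt_rpow_const _ _ (Or.inr hk')).tendsto.mono_left nhdsWithin_le_nhds)
    refine le_of_tendsto hlim ?_
    filter_upwards [Ioo_mem_nhdsGT hs] with ρ hρ
    exact hsuper.sInf_closedBall_mul_rpow_sub_two_le hlsc hnn hk hkN hρ.1 hρ.2.le
  · exact hsuper.sInf_closedBall_mul_rpow_sub_two_le hlsc hnn hk hkN hr hrs
end
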